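/- Exact minimization of I(Y;W|U) for the selection function (computation in Example 1). Let a ≥ 2 and b ≥ 1 be natural numbers. Let X be uniform over {1,…,a}, let Y = (Y_1,…,Y_a) where the Y_j are i.i.d. uniform over {1,…,2^b} and independent of X, and let f(x,(y_1,…,y_a)) = (x, y_x). Let U be a finite-valued random variable jointly distributed with X and conditionally independent of Y given X, and for u in the range of U set 𝒜_u = {x : P(U=u, X=x) > 0}. Then, over all finite-valued random variables W jointly distributed with (X,U,Y) such that X−(U,Y)−W is a Markov chain and (U,Y) ∈ W ∈ Γ(G_{U,Y|X,U}(f)), the minimum of I(Y;W|U) equals b · Σ_u |𝒜_u| · P(U=u) bits. -/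

import Mathlib

open scoped BigOperators Classical

section Preliminaries

variable {Ω : Type*} [Fintype Ω]

/-- The probability mass function of the random variable `X : Ω → α` under the
weight function `μ` on the finite sample space `Ω`. -/
noncomputable def pm {α : Type*} (μ : Ω → ℝ) (X : Ω → α) (a : α) : ℝ :=
  ∑ ω, if X ω = a then μ ω else 0

/-- `μ` is a probability mass function on the finite sample space `Ω`. -/
def IsPMF (μ : Ω → ℝ) : Prop := (∀ ω, 0 ≤ μ ω) ∧ ∑ ω, μ ω = 1

/-- Shannon entropy (in bits) of the random variable `X` under `μ`. -/
noncomputable def ent {α : Type*} [Fintype α] (μ : Ω → ℝ) (X : Ω → α) : ℝ :=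
  - ∑ a, pm μ X a * Real.logb 2 (pm μ X a)

/-- Conditional Shannon entropy H(X|Y) (in bits). -/
noncomputable def condEnt {α β : Type*} [Fintype α] [Fintype β] (μ : Ω → ℝ)
    (X : Ω → α) (Y : Ω → β) : ℝ :=
  ent μ (fun ω => (X ω, Y ω)) - ent μ Y

/-- Mutual information I(X;Y) (in bits). -/
noncomputable def mi {α β : Type*} [Fintype α] [Fintype β] (μ : Ω → ℝ)
    (X : Ω → α) (Y : Ω → β) : ℝ :=
  ent μ X + ent μ Y - ent μ (fun ω => (X ω, Y ω))

/-- Conditional mutual information I(X;Y|Z) (in bits). -/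
noncomputable def condMI {α β γ : Type*} [Fintype α] [Fintype β] [Fintype γ] (μ : Ω → ℝ)
    (X : Ω → α) (Y : Ω → β) (Z : Ω → γ) : ℝ :=
  condEnt μ X Z - condEnt μ X (fun ω => (Y ω, Z ω))

/-- `A` and `C` are conditionally independent given `B`
(the Markov chain A − B − C). -/
def CondIndepRV {α β γ : Type*} (μ : Ω → ℝ) (A : Ω → α) (B : Ω → β) (C : Ω → γ) : Prop :=
  ∀ a b c, pm μ (fun ω => (A ω, B ω, C ω)) (a, b, c) * pm μ B b
    = pm μ (fun ω => (A ω, B ω)) (a, b) * pm μ (fun ω => (B ω, C ω)) (b, c)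

/-- The conditional characteristic graph `G_{L|K}(f)` of `L` given `K`, with respect to
the source variable `S` and the function `f`: vertices `l₁ ≠ l₂` are adjacent iff there
are `k, s₁, s₂` with `p(l₁,k,s₁) ⬝ p(l₂,k,s₂) > 0` and `f s₁ ≠ f s₂`. -/
def charGraph {α β σ γ : Type*} (μ : Ω → ℝ) (L : Ω → α) (K : Ω → β) (S : Ω → σ)
    (f : σ → γ) : SimpleGraph α where
  Adj l₁ l₂ := l₁ ≠ l₂ ∧ ∃ k s₁ s₂,
    0 < pm μ (fun ω => (L ω, K ω, S ω)) (l₁, k, s₁) ∧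
    0 < pm μ (fun ω => (L ω, K ω, S ω)) (l₂, k, s₂) ∧ f s₁ ≠ f s₂
  symm := by
    constructor
    rintro l₁ l₂ ⟨h, k, s₁, s₂, h1, h2, hf⟩
    exact ⟨h.symm, k, s₂, s₁, h2, h1, hf.symm⟩
  loopless := by constructor; rintro l ⟨h, -⟩; exact h rfl

/-- A finite set of vertices is an independent set of the graph `G`. -/
def IsIndepSet {α : Type*} (G : SimpleGraph α) (s : Finset α) : Prop :=
  ∀ a ∈ s, ∀ b ∈ s, ¬ G.Adj a b

end Preliminaries

/-!
Write `A_u` for the support of `X` given `U = u`. Since `Y` is uniform on `κ^ι` and independent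
of `(U, X)`, two vertices `(u, y)`, `(u, y')` of the characteristic graph are adjacent exactly
when `y` and `y'` differ somewhere on `A_u`, so an independent set containing `(u, y)` pins down
`y` on `A_u`. Hence, given `(W, U) = (w, u)`, `Y` takes at most `|κ|^(|ι| - |A_u|)` values and
`H(Y | W, U) ≤ ∑_u p(u) (|ι| - |A_u|) log |κ|`, while `H(Y | U) = |ι| log |κ|`. Choosing for `W`
the set of all `(u, y')` with `y' = y` on `A_u` makes `Y` uniform on that set given `(W, U)`,
so the bound is attained.
-/

open Real

section Distribution

variable {Ω α β γ : Type*} [Fintype Ω] {μ : Ω → ℝ}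

theorem pm_nonneg (hμ : ∀ ω, 0 ≤ μ ω) (X : Ω → α) (a : α) : 0 ≤ pm μ X a :=
  Finset.sum_nonneg fun ω _ => by split_ifs <;> simp [hμ ω]

theorem exists_of_pm_ne_zero {X : Ω → α} {a : α} (h : pm μ X a ≠ 0) :
    ∃ ω, μ ω ≠ 0 ∧ X ω = a := by
  obtain ⟨ω, -, hω⟩ := Finset.exists_ne_zero_of_sum_ne_zero h
  by_cases hX : X ω = a
  · exact ⟨ω, by simpa [hX] using hω, hX⟩
  · simp [hX] at hω

theorem pm_congr {X : Ω → α} {X' : Ω → β} {a : α} {a' : β}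
    (h : ∀ ω, μ ω ≠ 0 → (X ω = a ↔ X' ω = a')) : pm μ X a = pm μ X' a' := by
  refine Finset.sum_congr rfl fun ω _ => ?_
  by_cases hω : μ ω = 0
  · simp [hω]
  · simp only [h ω hω]

theorem pm_pair_comm (X : Ω → α) (Y : Ω → β) (a : α) (b : β) :
    pm μ (fun ω => (X ω, Y ω)) (a, b) = pm μ (fun ω => (Y ω, X ω)) (b, a) :=
  pm_congr fun _ _ => by simp only [Prod.mk.injEq, and_comm]

theorem sum_pm_mul [Fintype α] (X : Ω → α) (g : α → ℝ) :
    ∑ a, pm μ X a * g a = ∑ ω, μ ω * g (X ω) := by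
  simp only [pm, Finset.sum_mul, ite_mul, zero_mul]
  rw [Finset.sum_comm]
  simp

theorem sum_pm_pair_mul_snd [Fintype α] [Fintype β] (W : Ω → α) (V : Ω → β) (h : β → ℝ) :
    ∑ v, pm μ (fun ω => (W ω, V ω)) v * h v.2 = ∑ b, pm μ V b * h b := by
  rw [sum_pm_mul, sum_pm_mul]

theorem sum_pm [Fintype α] (X : Ω → α) : ∑ a, pm μ X a = ∑ ω, μ ω := by
  simpa using sum_pm_mul (μ := μ) X 1

theorem sum_pm_pair_right [Fintype β] (X : Ω → α) (Y : Ω → β) (a : α) :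
    ∑ b, pm μ (fun ω => (X ω, Y ω)) (a, b) = pm μ X a := by
  simp only [pm, Prod.mk.injEq]
  rw [Finset.sum_comm]
  refine Finset.sum_congr rfl fun ω _ => ?_
  by_cases h : X ω = a <;> simp [h]

theorem sum_pm_pair_left [Fintype α] (X : Ω → α) (Y : Ω → β) (b : β) :
    ∑ a, pm μ (fun ω => (X ω, Y ω)) (a, b) = pm μ Y b := by
  simp only [pm_pair_comm X Y, sum_pm_pair_right]

theorem pm_pair_of_eq_comp [DecidableEq β] {D : Ω → α} {C : Ω → β} {g : α → β}
    (h : ∀ ω, μ ω ≠ 0 → C ω = g (D ω)) (d : α) (c : β) :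
    pm μ (fun ω => (D ω, C ω)) (d, c) = if c = g d then pm μ D d else 0 := by
  split_ifs with hc
  · refine pm_congr fun ω hω => ?_
    simp only [h ω hω, hc, Prod.mk.injEq, and_iff_left_iff_imp]
    rintro rfl
    rfl
  · refine Finset.sum_eq_zero fun ω _ => ?_
    by_cases hω : μ ω = 0
    · simp [hω]
    · simp only [Prod.mk.injEq, h ω hω]
      exact if_neg fun ⟨hd, hg⟩ => hc (hd ▸ hg).symm

theorem condIndepRV_of_eq_comp {A : Ω → α} {B : Ω → β} {C : Ω → γ} {g : β → γ}
    (h : ∀ ω, μ ω ≠ 0 → C ω = g (B ω)) : CondIndepRV μ A B C := by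
  intro a b c
  have hABC : pm μ (fun ω => (A ω, B ω, C ω)) (a, b, c)
      = if c = g b then pm μ (fun ω => (A ω, B ω)) (a, b) else 0 := by
    rw [← pm_pair_of_eq_comp (D := fun ω => (A ω, B ω)) (g := fun p => g p.2) h (a, b) c]
    exact pm_congr fun _ _ => by simp only [Prod.mk.injEq, and_assoc]
  rw [hABC, pm_pair_of_eq_comp h]
  split_ifs <;> ring

theorem pm_triple_eq_div_card_of_condIndepRV [Fintype β] {A : Ω → α} {B : Ω → β}
    {C : Ω → γ} (hM : CondIndepRV μ C A B) {a : α} {c : ℝ} (hc : c ≠ 0)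
    (hu : ∀ b, pm μ (fun ω => (A ω, B ω)) (a, b) = c) (u : γ) (b : β) :
    pm μ (fun ω => (C ω, A ω, B ω)) (u, a, b)
      = pm μ (fun ω => (C ω, A ω)) (u, a) / Fintype.card β := by
  have hA : pm μ A a = Fintype.card β * c := by
    simp [← sum_pm_pair_right A B a, hu]
  have hβ : (Fintype.card β : ℝ) ≠ 0 := by
    have : Nonempty β := ⟨b⟩
    positivity
  have h := hM u a b
  rw [hA, hu] at h
  field_simp
  apply mul_right_cancel₀ hc
  linear_combination h

end Distribution

theorem sum_negMulLog_le {ι : Type*} {t : Finset ι} {q : ι → ℝ} (hq : ∀ i ∈ t, 0 ≤ q i) :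
    ∑ i ∈ t, negMulLog (q i) ≤ negMulLog (∑ i ∈ t, q i) + (∑ i ∈ t, q i) * log t.card := by
  rcases t.eq_empty_or_nonempty with rfl | ht
  · simp
  set n : ℝ := (t.card : ℝ)
  have hn : 0 < n := by simpa [n] using ht.card_pos
  have hjensen := concaveOn_negMulLog.le_map_sum (t := t) (w := fun _ => n⁻¹) (p := q)
    (fun _ _ => by positivity) (by simp [n, hn.ne']) fun i hi => Set.mem_Ici.2 (hq i hi)
  simp only [smul_eq_mul, ← Finset.mul_sum] at hjensen
  rw [mul_comm, negMulLog_mul, negMulLog, log_inv] at hjensen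
  have := mul_le_mul_of_nonneg_left hjensen hn.le
  field_simp at this
  linarith

-- `(∑ q) · H(q / ∑ q)`: the contribution of one fiber to a conditional entropy.
noncomputable def fiberEntropy {ι : Type*} [Fintype ι] (q : ι → ℝ) : ℝ :=
  (∑ i, q i) * logb 2 (∑ i, q i) - ∑ i, q i * logb 2 (q i)

section FiberEntropy

variable {ι : Type*} [Fintype ι] {q : ι → ℝ}

theorem fiberEntropy_eq_of_uniform {N : ℝ} (h : ∀ i, q i ≠ 0 → q i = (∑ j, q j) / N) :
    fiberEntropy q = (∑ i, q i) * logb 2 N := by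
  set p := ∑ j, q j with hp
  have hterm : ∀ i, q i * logb 2 (q i) = q i * logb 2 (p / N) := fun i => by
    by_cases hi : q i = 0
    · simp [hi]
    · rw [← h i hi]
  rw [fiberEntropy, ← hp, Finset.sum_congr rfl fun i _ => hterm i, ← Finset.sum_mul, ← hp]
  by_cases hp0 : p = 0
  · simp [hp0]
  have hN : N ≠ 0 := by
    rintro rfl
    refine hp0 (Finset.sum_eq_zero fun i _ => ?_)
    by_contra hi
    exact hi (by simpa using h i hi)
  rw [logb_div hp0 hN]
  ring

theorem fiberEntropy_le (hq : ∀ i, 0 ≤ q i) {N : ℝ}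
    (hN : ((Finset.univ.filter fun i => q i ≠ 0).card : ℝ) ≤ N) :
    fiberEntropy q ≤ (∑ i, q i) * logb 2 N := by
  set t := Finset.univ.filter fun i => q i ≠ 0
  have hsupp : ∀ f : ℝ → ℝ, f 0 = 0 → ∑ i, f (q i) = ∑ i ∈ t, f (q i) := fun f hf =>
    (Finset.sum_subset (Finset.subset_univ t) fun i _ hi => by simp_all [t]).symm
  have hmul : ∀ x : ℝ, x * logb 2 x = -negMulLog x / log 2 := fun x => by
    simp only [negMulLog, logb]
    ring
  have hp : ∑ i, q i = ∑ i ∈ t, q i := hsupp (fun x => x) rfl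
  calc fiberEntropy q = (∑ i ∈ t, negMulLog (q i) - negMulLog (∑ i ∈ t, q i)) / log 2 := by
        rw [fiberEntropy, hmul, Finset.sum_congr rfl fun i _ => hmul (q i), ← Finset.sum_div,
          Finset.sum_neg_distrib, hsupp _ negMulLog_zero, hp]
        ring
    _ ≤ (∑ i ∈ t, q i) * log t.card / log 2 := by
        gcongr
        linarith [sum_negMulLog_le fun i (_ : i ∈ t) => hq i]
    _ ≤ (∑ i, q i) * logb 2 N := by
        rw [mul_div_assoc, ← logb, hp]
        rcases t.eq_empty_or_nonempty with ht | ht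
        · simp [ht]
        exact mul_le_mul_of_nonneg_left
          (logb_le_logb_of_le one_lt_two (by exact_mod_cast ht.card_pos) hN)
          (Finset.sum_nonneg fun i _ => hq i)

end FiberEntropy

section ConditionalEntropy

variable {Ω α β : Type*} [Fintype Ω] [Fintype α] [Fintype β] {μ : Ω → ℝ}

theorem condEnt_eq_sum_fiberEntropy (Z : Ω → α) (V : Ω → β) :
    condEnt μ Z V = ∑ v, fiberEntropy fun z => pm μ (fun ω => (Z ω, V ω)) (z, v) := by
  simp only [condEnt, ent, fiberEntropy, sum_pm_pair_left, Finset.sum_sub_distrib,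
    Fintype.sum_prod_type]
  rw [Finset.sum_comm]
  ring

theorem condEnt_eq_of_uniform {Z : Ω → α} {V : Ω → β} (N : β → ℝ)
    (h : ∀ z v, pm μ (fun ω => (Z ω, V ω)) (z, v) ≠ 0 →
      pm μ (fun ω => (Z ω, V ω)) (z, v) = pm μ V v / N v) :
    condEnt μ Z V = ∑ v, pm μ V v * logb 2 (N v) := by
  rw [condEnt_eq_sum_fiberEntropy]
  refine Finset.sum_congr rfl fun v _ => ?_
  rw [fiberEntropy_eq_of_uniform, sum_pm_pair_left]
  intro z hz
  rw [sum_pm_pair_left]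
  exact h z v hz

theorem condEnt_le_of_card_support_le (hμ : ∀ ω, 0 ≤ μ ω) {Z : Ω → α} {V : Ω → β}
    (N : β → ℝ)
    (h : ∀ v, ((Finset.univ.filter fun z => pm μ (fun ω => (Z ω, V ω)) (z, v) ≠ 0).card : ℝ)
      ≤ N v) :
    condEnt μ Z V ≤ ∑ v, pm μ V v * logb 2 (N v) := by
  rw [condEnt_eq_sum_fiberEntropy]
  refine Finset.sum_le_sum fun v _ => ?_
  rw [← sum_pm_pair_left Z V v]
  exact fiberEntropy_le (fun z => pm_nonneg hμ _ _) (h v)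

end ConditionalEntropy

section Marginal

variable {Ω α β γ 𝒲 : Type*} [Fintype Ω] [Fintype α] [Fintype γ]
  {μ : Ω → ℝ} {X : Ω → α} {U : Ω → β} {Y : Ω → γ}

def IsUniformIndep (μ : Ω → ℝ) (U : Ω → β) (X : Ω → α) (Y : Ω → γ) : Prop :=
  ∀ u x y, pm μ (fun ω => (U ω, X ω, Y ω)) (u, x, y)
    = pm μ (fun ω => (U ω, X ω)) (u, x) / Fintype.card γ

theorem IsUniformIndep.pm_pair_eq (hY : IsUniformIndep μ U X Y) (u : β) (y : γ) :
    pm μ (fun ω => (U ω, Y ω)) (u, y) = pm μ U u / Fintype.card γ := by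
  rw [← sum_pm_pair_left X, ← sum_pm_pair_right U X, Finset.sum_div]
  refine Finset.sum_congr rfl fun x _ => ?_
  rw [← hY]
  exact pm_congr fun _ _ => by simp only [Prod.mk.injEq]; tauto

variable [Fintype β] [Fintype 𝒲]

def HasMarginal (ν : α × β × γ × 𝒲 → ℝ) (μ : Ω → ℝ) (X : Ω → α) (U : Ω → β) (Y : Ω → γ) :
    Prop :=
  ∀ x u y, pm ν (fun ω' => (ω'.1, ω'.2.1, ω'.2.2.1)) (x, u, y)
    = pm μ (fun ω => (X ω, U ω, Y ω)) (x, u, y)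

variable {ν : α × β × γ × 𝒲 → ℝ}

theorem HasMarginal.pm_pair_eq (hmarg : HasMarginal ν μ X U Y) (u : β) (y : γ) :
    pm ν (fun ω' => (ω'.2.1, ω'.2.2.1)) (u, y) = pm μ (fun ω => (U ω, Y ω)) (u, y) := by
  rw [← sum_pm_pair_left (fun ω' => ω'.1), ← sum_pm_pair_left X]
  exact Finset.sum_congr rfl fun x _ => hmarg x u y

theorem HasMarginal.pm_eq (hmarg : HasMarginal ν μ X U Y) (u : β) :
    pm ν (fun ω' => ω'.2.1) u = pm μ U u := by
  rw [← sum_pm_pair_right _ (fun ω' => ω'.2.2.1), ← sum_pm_pair_right U Y]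
  exact Finset.sum_congr rfl fun y _ => hmarg.pm_pair_eq u y

theorem HasMarginal.condEnt_eq (hmarg : HasMarginal ν μ X U Y) (hY : IsUniformIndep μ U X Y) :
    condEnt ν (fun ω' => ω'.2.2.1) (fun ω' => ω'.2.1)
      = ∑ u, pm μ U u * logb 2 (Fintype.card γ) := by
  rw [condEnt_eq_of_uniform fun _ => (Fintype.card γ : ℝ)]
  · simp only [hmarg.pm_eq]
  · intro y u _
    rw [pm_pair_comm, hmarg.pm_pair_eq, hY.pm_pair_eq, hmarg.pm_eq]

end Marginal

section JointLaw

variable {Ω α β γ 𝒲 : Type*} [Fintype Ω] {μ : Ω → ℝ} {X : Ω → α} {U : Ω → β} {Y : Ω → γ}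

noncomputable def jointLaw (μ : Ω → ℝ) (X : Ω → α) (U : Ω → β) (Y : Ω → γ) (g : β → γ → 𝒲)
    (ω' : α × β × γ × 𝒲) : ℝ :=
  if ω'.2.2.2 = g ω'.2.1 ω'.2.2.1 then pm μ (fun ω => (X ω, U ω, Y ω)) (ω'.1, ω'.2.1, ω'.2.2.1)
  else 0

theorem eq_of_jointLaw_ne_zero {g : β → γ → 𝒲} {ω' : α × β × γ × 𝒲}
    (h : jointLaw μ X U Y g ω' ≠ 0) : ω'.2.2.2 = g ω'.2.1 ω'.2.2.1 := by
  by_contra hc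
  exact h (if_neg hc)

variable [Fintype α] [Fintype β] [Fintype γ] [Fintype 𝒲]

theorem hasMarginal_jointLaw (g : β → γ → 𝒲) : HasMarginal (jointLaw μ X U Y g) μ X U Y := by
  intro x u y
  simp [pm, jointLaw, Fintype.sum_prod_type, ite_and]

theorem isPMF_jointLaw (hμ : IsPMF μ) (g : β → γ → 𝒲) : IsPMF (jointLaw μ X U Y g) := by
  refine ⟨fun ω' => ?_, ?_⟩
  · unfold jointLaw
    split_ifs
    exacts [pm_nonneg hμ.1 _ _, le_rfl]
  · rw [← hμ.2, ← sum_pm (fun ω' : α × β × γ × 𝒲 => (ω'.1, ω'.2.1, ω'.2.2.1)),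
      ← sum_pm (fun ω => (X ω, U ω, Y ω))]
    exact Finset.sum_congr rfl fun t _ => hasMarginal_jointLaw g t.1 t.2.1 t.2.2

theorem condIndepRV_jointLaw (g : β → γ → 𝒲) :
    CondIndepRV (jointLaw μ X U Y g) (fun ω' => ω'.1) (fun ω' => (ω'.2.1, ω'.2.2.1))
      (fun ω' => ω'.2.2.2) :=
  condIndepRV_of_eq_comp (g := fun p => g p.1 p.2) fun _ => eq_of_jointLaw_ne_zero

theorem pm_jointLaw [DecidableEq 𝒲] (g : β → γ → 𝒲) (y : γ) (w : 𝒲) (u : β) :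
    pm (jointLaw μ X U Y g) (fun ω' => (ω'.2.2.1, ω'.2.2.2, ω'.2.1)) (y, w, u)
      = if w = g u y then pm μ (fun ω => (U ω, Y ω)) (u, y) else 0 := by
  calc _ = pm (jointLaw μ X U Y g) (fun ω' => ((ω'.2.2.1, ω'.2.1), ω'.2.2.2)) ((y, u), w) :=
        pm_congr fun _ _ => by simp only [Prod.mk.injEq]; tauto
    _ = if w = g u y then pm (jointLaw μ X U Y g) (fun ω' => (ω'.2.2.1, ω'.2.1)) (y, u) else 0 :=
        pm_pair_of_eq_comp (g := fun p : γ × β => g p.2 p.1) (fun _ => eq_of_jointLaw_ne_zero) _ _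
    _ = _ := by rw [pm_pair_comm, (hasMarginal_jointLaw g).pm_pair_eq]

end JointLaw

section Selection

variable {Ω 𝒰 ι κ : Type*} [Fintype Ω] {μ : Ω → ℝ} {X : Ω → ι} {Y : Ω → ι → κ} {U : Ω → 𝒰}

-- The set `𝒜_u` of the paper.
noncomputable def condSupport [Fintype ι] (μ : Ω → ℝ) (U : Ω → 𝒰) (X : Ω → ι) (u : 𝒰) :
    Finset ι :=
  Finset.univ.filter fun x => 0 < pm μ (fun ω => (U ω, X ω)) (u, x)

def selectionGraph (μ : Ω → ℝ) (X : Ω → ι) (Y : Ω → ι → κ) (U : Ω → 𝒰) :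
    SimpleGraph (𝒰 × (ι → κ)) :=
  charGraph μ (fun ω => (U ω, Y ω)) (fun ω => (X ω, U ω)) (fun ω => (X ω, Y ω))
    fun s => (s.1, s.2 s.1)

variable [Fintype ι] [DecidableEq ι] [Fintype κ]

theorem card_filter_forall_mem_eq (s : Finset ι) (y₀ : ι → κ) :
    (Finset.univ.filter fun y : ι → κ => ∀ x ∈ s, y₀ x = y x).card
      = Fintype.card κ ^ (Fintype.card ι - s.card) := by
  have h : (Finset.univ.filter fun y : ι → κ => ∀ x ∈ s, y₀ x = y x)
      = Fintype.piFinset fun x => if x ∈ s then {y₀ x} else Finset.univ := by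
    ext y
    simp only [Finset.mem_filter, Finset.mem_univ, true_and, Fintype.mem_piFinset]
    refine forall_congr' fun x => ?_
    split_ifs with hx <;> simp [hx, eq_comm]
  rw [h, Fintype.card_piFinset]
  simp only [apply_ite Finset.card, Finset.card_singleton, Finset.card_univ]
  rw [Finset.prod_ite, Finset.prod_const_one, one_mul, Finset.prod_const, Finset.filter_not,
    Finset.card_sdiff]
  simp

theorem sum_mul_logb_card_pi_sub {𝒰 : Type*} [Fintype 𝒰] (A : 𝒰 → Finset ι) (p : 𝒰 → ℝ) :
    ∑ u, p u * logb 2 (Fintype.card (ι → κ))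
      - ∑ u, p u * logb 2 ((Fintype.card κ ^ (Fintype.card ι - (A u).card) : ℕ) : ℝ)
      = logb 2 (Fintype.card κ) * ∑ u, ((A u).card : ℝ) * p u := by
  rw [← Finset.sum_sub_distrib, Finset.mul_sum]
  refine Finset.sum_congr rfl fun u _ => ?_
  rw [Fintype.card_fun, Nat.cast_pow, Nat.cast_pow, logb_pow, logb_pow,
    Nat.cast_sub (Finset.card_le_univ (A u))]
  ring

theorem selectionGraph_adj_iff (hY : IsUniformIndep μ U X Y) {u₁ u₂ : 𝒰} {y₁ y₂ : ι → κ} :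
    (selectionGraph μ X Y U).Adj (u₁, y₁) (u₂, y₂) ↔
      u₁ = u₂ ∧ ∃ x ∈ condSupport μ U X u₁, y₁ x ≠ y₂ x := by
  have hpos : ∀ u x y, 0 < pm μ (fun ω => ((U ω, Y ω), (X ω, U ω), (X ω, Y ω)))
      ((u, y), (x, u), (x, y)) ↔ x ∈ condSupport μ U X u := by
    intro u x y
    have : Nonempty (ι → κ) := ⟨y⟩
    rw [pm_congr (X' := fun ω => (U ω, X ω, Y ω)) (a' := (u, x, y))
      fun _ _ => by simp only [Prod.mk.injEq]; tauto, hY,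
      div_pos_iff_of_pos_right (by exact_mod_cast Fintype.card_pos)]
    simp [condSupport]
  constructor
  · rintro ⟨-, ⟨x, u⟩, ⟨x₁, z₁⟩, ⟨x₂, z₂⟩, h₁, h₂, hf⟩
    obtain ⟨ω₁, -, he₁⟩ := exists_of_pm_ne_zero h₁.ne'
    obtain ⟨ω₂, -, he₂⟩ := exists_of_pm_ne_zero h₂.ne'
    simp only [Prod.mk.injEq] at he₁ he₂ hf
    obtain ⟨⟨rfl, rfl⟩, ⟨rfl, rfl⟩, rfl, rfl⟩ := he₁
    obtain ⟨⟨rfl, rfl⟩, ⟨hx, hu⟩, rfl, rfl⟩ := he₂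
    exact ⟨hu.symm, X ω₁, (hpos _ _ _).1 h₁, fun h => hf (by rw [hx, h])⟩
  · rintro ⟨rfl, x, hx, hne⟩
    refine ⟨fun h => hne (by rw [(Prod.mk.inj h).2]), (x, u₁), (x, y₁), (x, y₂),
      (hpos _ _ _).2 hx, (hpos _ _ _).2 hx, fun h => hne (Prod.mk.inj h).2⟩

theorem isIndepSet_selectionGraph_iff (hY : IsUniformIndep μ U X Y)
    {w : Finset (𝒰 × (ι → κ))} :
    IsIndepSet (selectionGraph μ X Y U) w ↔ ∀ u y₁ y₂, (u, y₁) ∈ w → (u, y₂) ∈ w →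
      ∀ x ∈ condSupport μ U X u, y₁ x = y₂ x := by
  constructor
  · intro hw u y₁ y₂ h₁ h₂ x hx
    by_contra hne
    exact hw _ h₁ _ h₂ ((selectionGraph_adj_iff hY).2 ⟨rfl, x, hx, hne⟩)
  · rintro hw ⟨u₁, y₁⟩ h₁ ⟨u₂, y₂⟩ h₂ hadj
    obtain ⟨rfl, x, hx, hne⟩ := (selectionGraph_adj_iff hY).1 hadj
    exact hne (hw u₁ y₁ y₂ h₁ h₂ x hx)

variable [Fintype 𝒰]

theorem card_support_fiber_le (hY : IsUniformIndep μ U X Y)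
    {ν : ι × 𝒰 × (ι → κ) × Finset (𝒰 × (ι → κ)) → ℝ} (hν : ∀ ω', 0 ≤ ν ω')
    (hsupp : ∀ ω', 0 < ν ω' → (ω'.2.1, ω'.2.2.1) ∈ ω'.2.2.2 ∧
      IsIndepSet (selectionGraph μ X Y U) ω'.2.2.2)
    (w : Finset (𝒰 × (ι → κ))) (u : 𝒰) :
    ((Finset.univ.filter fun y => pm ν (fun ω' => (ω'.2.2.1, ω'.2.2.2, ω'.2.1)) (y, w, u) ≠ 0).card
      : ℝ) ≤ ((Fintype.card κ ^ (Fintype.card ι - (condSupport μ U X u).card) : ℕ) : ℝ) := by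
  have hmem : ∀ y, pm ν (fun ω' => (ω'.2.2.1, ω'.2.2.2, ω'.2.1)) (y, w, u) ≠ 0 →
      (u, y) ∈ w ∧ IsIndepSet (selectionGraph μ X Y U) w := by
    intro y h
    obtain ⟨ω', hω', he⟩ := exists_of_pm_ne_zero h
    simp only [Prod.mk.injEq] at he
    obtain ⟨rfl, rfl, rfl⟩ := he
    exact hsupp ω' ((hν ω').lt_of_ne' hω')
  rcases (Finset.univ.filter fun y =>
    pm ν (fun ω' => (ω'.2.2.1, ω'.2.2.2, ω'.2.1)) (y, w, u) ≠ 0).eq_empty_or_nonempty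
    with hempty | ⟨y₀, hy₀⟩
  · rw [hempty, Finset.card_empty, Nat.cast_zero]
    positivity
  rw [← card_filter_forall_mem_eq _ y₀]
  refine Nat.cast_le.2 (Finset.card_le_card fun y hy => ?_)
  rw [Finset.mem_filter] at hy hy₀ ⊢
  obtain ⟨hy₀w, hw⟩ := hmem y₀ hy₀.2
  exact ⟨Finset.mem_univ y,
    (isIndepSet_selectionGraph_iff hY).1 hw u y₀ y hy₀w (hmem y hy.2).1⟩

theorem le_condMI_of_isIndepSet (hY : IsUniformIndep μ U X Y)
    {ν : ι × 𝒰 × (ι → κ) × Finset (𝒰 × (ι → κ)) → ℝ} (hν : ∀ ω', 0 ≤ ν ω')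
    (hmarg : HasMarginal ν μ X U Y)
    (hsupp : ∀ ω', 0 < ν ω' → (ω'.2.1, ω'.2.2.1) ∈ ω'.2.2.2 ∧
      IsIndepSet (selectionGraph μ X Y U) ω'.2.2.2) :
    logb 2 (Fintype.card κ) * ∑ u, ((condSupport μ U X u).card : ℝ) * pm μ U u
      ≤ condMI ν (fun ω' => ω'.2.2.1) (fun ω' => ω'.2.2.2) (fun ω' => ω'.2.1) := by
  set N : 𝒰 → ℝ := fun u =>
    ((Fintype.card κ ^ (Fintype.card ι - (condSupport μ U X u).card) : ℕ) : ℝ)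
  have hfiber : condEnt ν (fun ω' => ω'.2.2.1) (fun ω' => (ω'.2.2.2, ω'.2.1))
      ≤ ∑ u, pm μ U u * logb 2 (N u) :=
    calc _ ≤ ∑ v : Finset (𝒰 × (ι → κ)) × 𝒰,
          pm ν (fun ω' => (ω'.2.2.2, ω'.2.1)) v * logb 2 (N v.2) :=
          condEnt_le_of_card_support_le hν _ fun v => card_support_fiber_le hY hν hsupp v.1 v.2
      _ = ∑ u, pm μ U u * logb 2 (N u) := by
          rw [sum_pm_pair_mul_snd _ _ fun u => logb 2 (N u)]
          simp only [hmarg.pm_eq]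
  rw [condMI, hmarg.condEnt_eq hY, ← sum_mul_logb_card_pi_sub]
  linarith

noncomputable def agreeSet (A : 𝒰 → Finset ι) (u : 𝒰) (y : ι → κ) : Finset (𝒰 × (ι → κ)) :=
  Finset.univ.filter fun p => p.1 = u ∧ ∀ x ∈ A u, p.2 x = y x

theorem mem_agreeSet {A : 𝒰 → Finset ι} {u : 𝒰} {y : ι → κ} {p : 𝒰 × (ι → κ)} :
    p ∈ agreeSet A u y ↔ p.1 = u ∧ ∀ x ∈ A u, p.2 x = y x := by
  simp [agreeSet]

theorem agreeSet_eq_agreeSet_iff {A : 𝒰 → Finset ι} {u : 𝒰} {y y' : ι → κ} :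
    agreeSet A u y = agreeSet A u y' ↔ ∀ x ∈ A u, y x = y' x := by
  constructor
  · intro h
    have : (u, y) ∈ agreeSet A u y' := h ▸ mem_agreeSet.2 ⟨rfl, fun _ _ => rfl⟩
    exact (mem_agreeSet.1 this).2
  · intro h
    ext p
    simp only [mem_agreeSet]
    exact and_congr_right fun _ => forall₂_congr fun x hx => by rw [h x hx]

theorem isIndepSet_agreeSet (hY : IsUniformIndep μ U X Y) (u : 𝒰) (y : ι → κ) :
    IsIndepSet (selectionGraph μ X Y U) (agreeSet (condSupport μ U X) u y) := by
  refine (isIndepSet_selectionGraph_iff hY).2 fun u' y₁ y₂ h₁ h₂ x hx => ?_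
  obtain ⟨rfl, h₁⟩ := mem_agreeSet.1 h₁
  exact (h₁ x hx).trans ((mem_agreeSet.1 h₂).2 x hx).symm

theorem condMI_jointLaw_agreeSet (hY : IsUniformIndep μ U X Y) :
    condMI (jointLaw μ X U Y (agreeSet (condSupport μ U X))) (fun ω' => ω'.2.2.1)
      (fun ω' => ω'.2.2.2) (fun ω' => ω'.2.1)
      = logb 2 (Fintype.card κ) * ∑ u, ((condSupport μ U X u).card : ℝ) * pm μ U u := by
  set A := condSupport μ U X
  set ν := jointLaw μ X U Y (agreeSet A)
  set N : 𝒰 → ℝ := fun u => ((Fintype.card κ ^ (Fintype.card ι - (A u).card) : ℕ) : ℝ)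
  have hmarg : HasMarginal ν μ X U Y := hasMarginal_jointLaw _
  have hjoint : ∀ y w u, pm ν (fun ω' => (ω'.2.2.1, ω'.2.2.2, ω'.2.1)) (y, w, u)
      = if w = agreeSet A u y then pm μ U u / Fintype.card (ι → κ) else 0 := fun y w u => by
    rw [pm_jointLaw, hY.pm_pair_eq]
  have huniform : ∀ y w u, pm ν (fun ω' => (ω'.2.2.1, ω'.2.2.2, ω'.2.1)) (y, w, u) ≠ 0 →
      pm ν (fun ω' => (ω'.2.2.1, ω'.2.2.2, ω'.2.1)) (y, w, u)
        = pm ν (fun ω' => (ω'.2.2.2, ω'.2.1)) (w, u) / N u := by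
    intro y w u h
    obtain rfl : w = agreeSet A u y := by
      by_contra hw
      exact h (by rw [hjoint, if_neg hw])
    have hcard : 0 < (Finset.univ.filter fun y' : ι → κ => ∀ x ∈ A u, y x = y' x).card :=
      Finset.card_pos.2 ⟨y, by simp⟩
    dsimp only [N]
    rw [← sum_pm_pair_left (μ := ν) (fun ω' => ω'.2.2.1) (fun ω' => (ω'.2.2.2, ω'.2.1)),
      ← card_filter_forall_mem_eq (A u) y]
    simp only [hjoint, agreeSet_eq_agreeSet_iff, if_true, ← Finset.sum_filter, Finset.sum_const,
      nsmul_eq_mul]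
    field_simp
  rw [condMI, hmarg.condEnt_eq hY, condEnt_eq_of_uniform (fun v => N v.2)
    fun y v => huniform y v.1 v.2, sum_pm_pair_mul_snd _ _ fun u => logb 2 (N u)]
  simp only [hmarg.pm_eq]
  exact sum_mul_logb_card_pi_sub A _

theorem isLeast_condMI_selection (hμ : IsPMF μ) (hY : IsUniformIndep μ U X Y) :
    IsLeast
      { r : ℝ |
        ∃ ν : ι × 𝒰 × (ι → κ) × Finset (𝒰 × (ι → κ)) → ℝ,
          IsPMF ν ∧
          (∀ x u y, pm ν (fun ω' => (ω'.1, ω'.2.1, ω'.2.2.1)) (x, u, y)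
            = pm μ (fun ω => (X ω, U ω, Y ω)) (x, u, y)) ∧
          CondIndepRV ν (fun ω' => ω'.1) (fun ω' => (ω'.2.1, ω'.2.2.1))
            (fun ω' => ω'.2.2.2) ∧
          (∀ ω', 0 < ν ω' → (ω'.2.1, ω'.2.2.1) ∈ ω'.2.2.2 ∧
            IsIndepSet (selectionGraph μ X Y U) ω'.2.2.2) ∧
          r = condMI ν (fun ω' => ω'.2.2.1) (fun ω' => ω'.2.2.2) (fun ω' => ω'.2.1) }
      (logb 2 (Fintype.card κ) * ∑ u, ((condSupport μ U X u).card : ℝ) * pm μ U u) := by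
  refine ⟨⟨jointLaw μ X U Y (agreeSet (condSupport μ U X)), isPMF_jointLaw hμ _,
    hasMarginal_jointLaw _, condIndepRV_jointLaw _, fun ω' h => ?_,
    (condMI_jointLaw_agreeSet hY).symm⟩, ?_⟩
  · rw [eq_of_jointLaw_ne_zero h.ne']
    exact ⟨mem_agreeSet.2 ⟨rfl, fun _ _ => rfl⟩, isIndepSet_agreeSet hY _ _⟩
  · rintro r ⟨ν, hν, hmarg, -, hsupp, rfl⟩
    exact le_condMI_of_isIndepSet hY hν.1 hmarg hsupp

end Selection

theorem example_min_conditional_mutual_information_general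
    {Ω 𝒰 : Type*} [Fintype Ω] [Fintype 𝒰]
    (a b : ℕ)
    (μ : Ω → ℝ) (hμ : IsPMF μ)
    (X : Ω → Fin a) (Y : Ω → (Fin a → Fin (2 ^ b))) (U : Ω → 𝒰)
    -- (X, Y) is uniform: X uniform, Y i.i.d. uniform independent of X
    (huniform : ∀ x y, pm μ (fun ω => (X ω, Y ω)) (x, y)
      = ((a : ℝ) * ((2 : ℝ) ^ b) ^ (a : ℕ))⁻¹)
    -- Markov chain U − X − Y
    (hMarkov : CondIndepRV μ U X Y) :
    IsLeast
      { r : ℝ |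
        ∃ ν : Fin a × 𝒰 × (Fin a → Fin (2 ^ b))
              × Finset (𝒰 × (Fin a → Fin (2 ^ b))) → ℝ,
          IsPMF ν ∧
          -- the marginal of (X,U,Y) under ν matches its distribution under μ
          (∀ x u y, pm ν (fun ω' => (ω'.1, ω'.2.1, ω'.2.2.1)) (x, u, y)
            = pm μ (fun ω => (X ω, U ω, Y ω)) (x, u, y)) ∧
          -- Markov chain X − (U,Y) − W
          CondIndepRV ν (fun ω' => ω'.1) (fun ω' => (ω'.2.1, ω'.2.2.1))
            (fun ω' => ω'.2.2.2) ∧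
          -- (U,Y) ∈ W ∈ Γ(G_{U,Y | X,U}(f))
          (∀ ω', 0 < ν ω' → (ω'.2.1, ω'.2.2.1) ∈ ω'.2.2.2 ∧
            IsIndepSet (charGraph μ (fun ω => (U ω, Y ω)) (fun ω => (X ω, U ω))
              (fun ω => (X ω, Y ω))
              (fun s : Fin a × (Fin a → Fin (2 ^ b)) => (s.1, s.2 s.1))) ω'.2.2.2) ∧
          r = condMI ν (fun ω' => ω'.2.2.1) (fun ω' => ω'.2.2.2) (fun ω' => ω'.2.1) }
      ((b : ℝ) * ∑ u : 𝒰,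
        ((Finset.univ.filter fun x => 0 < pm μ (fun ω => (U ω, X ω)) (u, x)).card : ℝ)
          * pm μ U u) := by
  have hY : IsUniformIndep μ U X Y :=
    fun u x y => pm_triple_eq_div_card_of_condIndepRV hMarkov
      (by have := x.pos; positivity) (huniform x) u y
  have h := isLeast_condMI_selection hμ hY
  rwa [Fintype.card_fin, Nat.cast_pow, Nat.cast_ofNat, logb_pow,
    logb_self_eq_one one_lt_two, mul_one] at h

/-- **Computation in Example 1.** Let `X` be uniform over `{1,…,a}`, `Y = (Y_1,…,Y_a)`
with the `Y_j` i.i.d. uniform over `{1,…,2^b}` and independent of `X`, and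
`f(x,y) = (x, y_x)`. Let `U` be jointly distributed with `X`, conditionally independent
of `Y` given `X`, and let `𝒜_u = {x : P(U = u, X = x) > 0}`. Then the minimum of
`I(Y;W|U)` over all `W` jointly distributed with `(X,U,Y)` such that `X − (U,Y) − W`
is a Markov chain and `(U,Y) ∈ W ∈ Γ(G_{U,Y|X,U}(f))` equals
`b · Σ_u |𝒜_u| · P(U = u)` bits. A joint distribution of `(X,U,Y,W)` is encoded by a
pmf `ν` on the canonical space `Fin a × 𝒰 × (Fin a → Fin (2^b)) × Finset (𝒰 × (Fin a → Fin (2^b)))`. -/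
theorem example_min_conditional_mutual_information
    {Ω 𝒰 : Type*} [Fintype Ω] [Fintype 𝒰]
    (a b : ℕ) (ha : 2 ≤ a) (hb : 1 ≤ b)
    (μ : Ω → ℝ) (hμ : IsPMF μ)
    (X : Ω → Fin a) (Y : Ω → (Fin a → Fin (2 ^ b))) (U : Ω → 𝒰)
    -- (X, Y) is uniform: X uniform, Y i.i.d. uniform independent of X
    (huniform : ∀ x y, pm μ (fun ω => (X ω, Y ω)) (x, y)
      = ((a : ℝ) * ((2 : ℝ) ^ b) ^ (a : ℕ))⁻¹)
    -- Markov chain U − X − Y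
    (hMarkov : CondIndepRV μ U X Y) :
    IsLeast
      { r : ℝ |
        ∃ ν : Fin a × 𝒰 × (Fin a → Fin (2 ^ b))
              × Finset (𝒰 × (Fin a → Fin (2 ^ b))) → ℝ,
          IsPMF ν ∧
          -- the marginal of (X,U,Y) under ν matches its distribution under μ
          (∀ x u y, pm ν (fun ω' => (ω'.1, ω'.2.1, ω'.2.2.1)) (x, u, y)
            = pm μ (fun ω => (X ω, U ω, Y ω)) (x, u, y)) ∧
          -- Markov chain X − (U,Y) − W
          CondIndepRV ν (fun ω' => ω'.1) (fun ω' => (ω'.2.1, ω'.2.2.1))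
            (fun ω' => ω'.2.2.2) ∧
          -- (U,Y) ∈ W ∈ Γ(G_{U,Y | X,U}(f))
          (∀ ω', 0 < ν ω' → (ω'.2.1, ω'.2.2.1) ∈ ω'.2.2.2 ∧
            IsIndepSet (charGraph μ (fun ω => (U ω, Y ω)) (fun ω => (X ω, U ω))
              (fun ω => (X ω, Y ω))
              (fun s : Fin a × (Fin a → Fin (2 ^ b)) => (s.1, s.2 s.1))) ω'.2.2.2) ∧
          r = condMI ν (fun ω' => ω'.2.2.1) (fun ω' => ω'.2.2.2) (fun ω' => ω'.2.1) }
      ((b : ℝ) * ∑ u : 𝒰,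
        ((Finset.univ.filter fun x => 0 < pm μ (fun ω => (U ω, X ω)) (u, x)).card : ℝ)
          * pm μ U u) :=
  example_min_conditional_mutual_information_general a b μ hμ X Y U huniform hMarkov
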